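/- Let ε: S → Q be a surjective ring homomorphism and θ: S → Λ a ring homomorphism (rings associative with unity, not necessarily commutative) such that for every square matrix A over S, if the matrix obtained by applying ε to each entry of A is invertible over Q, then the matrix obtained by applying θ to each entry of A is invertible over Λ. Let (k_i)_{i∈ℕ} be natural numbers and (A_i)_{i∈ℕ} matrices, with A_i of size k_i × k_{i+1} over S, satisfying A_i · A_{i+1} = 0, defining a chain complex of finitely generated free left S-modules S^{k_i} (zero in negative degrees). Let n ∈ ℕ. If the chain complex over Q obtained by applying ε entrywise is exact at every degree i ≤ n (exactness at degree 0 meaning that the differential out of degree 1 is surjective), then the chain complex over Λ obtained by applying θ entrywise is exact at every degree i ≤ n. -/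
import Mathlib


/-- Exactness at degree `i` of the chain complex of finitely generated free left
`S`-modules `S^{k i}` whose differential `∂_{i+1} : S^{k (i+1)} → S^{k i}` is given by
the matrix `A i` (via `mulVec`).  Exactness at degree `0` means that the differential
out of degree `1` is surjective; exactness at degree `i+1` means that the kernel of
`∂_{i+1}` equals the image of `∂_{i+2}`. -/
def MatrixComplexExactAt {S : Type*} [Ring S] {k : ℕ → ℕ}
    (A : ∀ i, Matrix (Fin (k i)) (Fin (k (i + 1))) S) : ℕ → Prop
  | 0 => Function.Surjective (A 0).mulVec
  | i + 1 => ∀ x : Fin (k (i + 1)) → S,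
      (A i).mulVec x = 0 → ∃ y : Fin (k (i + 2)) → S, (A (i + 1)).mulVec y = x

/-- Lift a matrix over `Q` to a matrix over `S` along a surjective ring hom. -/
lemma matrix_surj_lift {S Q : Type*} [Ring S] [Ring Q] {m n : ℕ}
    (ε : S →+* Q) (hε : Function.Surjective ε) (M : Matrix (Fin m) (Fin n) Q) :
    ∃ B : Matrix (Fin m) (Fin n) S, B.map ε = M := by
  choose f hf using hε
  refine ⟨Matrix.of fun i j => f (M i j), ?_⟩
  ext i j
  simp [Matrix.map_apply, hf]

/-- A column of a matrix product is the `mulVec` of the corresponding column. -/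
lemma mulVec_col {Q : Type*} [Ring Q] {m n p : ℕ}
    (M : Matrix (Fin m) (Fin n) Q) (N : Matrix (Fin n) (Fin p) Q) (q : Fin p) :
    M.mulVec (fun l => N l q) = fun i => (M * N) i q := by
  funext i
  simp [Matrix.mulVec, Matrix.mul_apply, dotProduct]

/-- Vogel's partial chain contraction lemma.  Let `ε : S → Q` be a surjective ring
homomorphism and `θ : S → Λ` a ring homomorphism inverting every square matrix over `S`
that becomes invertible over `Q`.  If a chain complex of finitely generated free left
`S`-modules, given by matrices `A i` with `A i * A (i+1) = 0`, becomes exact in degrees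
`≤ n` after applying `ε` entrywise, then it becomes exact in degrees `≤ n` after
applying `θ` entrywise. -/
theorem matrixComplex_exact_of_inverts (S Q Λ : Type*) [Ring S] [Ring Q] [Ring Λ]
    (ε : S →+* Q) (hε : Function.Surjective ε) (θ : S →+* Λ)
    (hinv : ∀ (m : ℕ) (A : Matrix (Fin m) (Fin m) S),
      IsUnit (A.map ε) → IsUnit (A.map θ))
    (k : ℕ → ℕ) (A : ∀ i, Matrix (Fin (k i)) (Fin (k (i + 1))) S)
    (hA : ∀ i, A i * A (i + 1) = 0) (n : ℕ)
    (hexact : ∀ i ≤ n, MatrixComplexExactAt (fun i => (A i).map ε) i) :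
    ∀ i ≤ n, MatrixComplexExactAt (fun i => (A i).map θ) i := by
  classical
  -- Step 1: construct a partial chain contraction over S (whose ε-image contracts over Q).
  have key : ∀ i, i ≤ n →
      ∃ B : ∀ j : ℕ, Matrix (Fin (k (j + 1))) (Fin (k j)) S,
        ((A 0 * B 0).map ε = 1) ∧
        ∀ j, j < i → ((A (j + 1) * B (j + 1) + B j * A j).map ε = 1) := by
    intro i
    induction i with
    | zero =>
      intro _
      -- surjectivity of (A 0).map ε gives a right inverse matrix over Q; lift it.
      have hsurj : Function.Surjective ((A 0).map ε).mulVec := hexact 0 (Nat.zero_le n)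
      choose v hv using hsurj
      set G : Matrix (Fin (k 1)) (Fin (k 0)) Q :=
        Matrix.of (fun p q => v (Pi.single q 1) p) with hG
      have hAG : (A 0).map ε * G = 1 := by
        ext p q
        have := congrFun (hv (Pi.single q 1)) p
        rw [show ((A 0).map ε * G) p q
            = ((A 0).map ε).mulVec (fun l => G l q) p from
              (congrFun (mulVec_col ((A 0).map ε) G q) p).symm]
        simp only [hG, Matrix.of_apply] at this ⊢
        rw [this]
        simp [Pi.single_apply, Matrix.one_apply, eq_comm]
      obtain ⟨B0, hB0⟩ := matrix_surj_lift ε hε G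
      refine ⟨Function.update (fun j => (0 : Matrix (Fin (k (j + 1))) (Fin (k j)) S)) 0 B0,
        ?_, ?_⟩
      · rw [Function.update_self, Matrix.map_mul, hB0, hAG]
      · intro j hj; omega
    | succ i ih =>
      intro hin
      obtain ⟨B, hB0, hBs⟩ := ih (Nat.le_of_succ_le hin)
      -- H = 1 - ε(B i * A i); its columns are cycles over Q at degree i+1.
      set H : Matrix (Fin (k (i + 1))) (Fin (k (i + 1))) Q :=
        1 - (B i * A i).map ε with hH
      have hABi : ((A i * B i).map ε) * ((A i).map ε) = (A i).map ε := by
        cases i with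
        | zero => rw [hB0, Matrix.one_mul]
        | succ j =>
          have h2 : (A (j + 1) * B (j + 1)).map ε + (B j * A j).map ε = 1 := by
            rw [← Matrix.map_add ε (fun a b => map_add ε a b)]
            exact hBs j (Nat.lt_succ_self j)
          have h1 : (A (j + 1) * B (j + 1)).map ε = 1 - (B j * A j).map ε :=
            eq_sub_of_add_eq h2
          rw [h1, Matrix.sub_mul, Matrix.one_mul, ← Matrix.map_mul,
            Matrix.mul_assoc, hA j, Matrix.mul_zero,
            Matrix.map_zero _ (map_zero ε), sub_zero]
      have hkill : ((A i).map ε) * H = 0 := by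
        rw [hH, Matrix.mul_sub, Matrix.mul_one, ← Matrix.map_mul, ← Matrix.mul_assoc,
          Matrix.map_mul, hABi, sub_self]
      -- lift each column of H through the differential over Q
      have hex : ∀ x : Fin (k (i + 1)) → Q, ((A i).map ε).mulVec x = 0 →
          ∃ y : Fin (k (i + 2)) → Q, ((A (i + 1)).map ε).mulVec y = x :=
        hexact (i + 1) hin
      have hcol : ∀ q : Fin (k (i + 1)),
          ∃ y : Fin (k (i + 2)) → Q, ((A (i + 1)).map ε).mulVec y = fun p => H p q := by
        intro q
        apply hex
        rw [mulVec_col]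
        funext p
        rw [hkill]
        rfl
      choose y hy using hcol
      set C0 : Matrix (Fin (k (i + 2))) (Fin (k (i + 1))) Q :=
        Matrix.of (fun p q => y q p) with hC0
      have hAC0 : ((A (i + 1)).map ε) * C0 = H := by
        ext p q
        have := congrFun (hy q) p
        rw [show (((A (i + 1)).map ε) * C0) p q
            = ((A (i + 1)).map ε).mulVec (fun l => C0 l q) p from
              (congrFun (mulVec_col ((A (i + 1)).map ε) C0 q) p).symm]
        simpa [hC0] using this
      obtain ⟨C, hC⟩ := matrix_surj_lift ε hε C0
      refine ⟨Function.update B (i + 1) C, ?_, ?_⟩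
      · rwa [Function.update_of_ne (by omega : (0 : ℕ) ≠ i + 1)]
      · intro j hj
        rcases Nat.lt_succ_iff_lt_or_eq.mp hj with hj' | rfl
        · rw [Function.update_of_ne (by omega : j + 1 ≠ i + 1),
            Function.update_of_ne (by omega : j ≠ i + 1)]
          exact hBs j hj'
        · rw [Function.update_self, Function.update_of_ne (by omega : j ≠ j + 1)]
          rw [Matrix.map_add ε (fun a b => map_add ε a b), Matrix.map_mul, hC, hAC0, hH]
          abel
  obtain ⟨B, hB0, hBs⟩ := key n le_rfl
  -- Step 2: the "would-be identity" matrices U m.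
  obtain ⟨U, hU0, hUs⟩ : ∃ U : ∀ m : ℕ, Matrix (Fin (k m)) (Fin (k m)) S,
      U 0 = A 0 * B 0 ∧ ∀ m, U (m + 1) = A (m + 1) * B (m + 1) + B m * A m :=
    ⟨fun m => match m with
      | 0 => A 0 * B 0
      | m + 1 => A (m + 1) * B (m + 1) + B m * A m, rfl, fun m => rfl⟩
  have hUe : ∀ m, m ≤ n → (U m).map ε = 1 := by
    intro m hm
    cases m with
    | zero => rw [hU0]; exact hB0
    | succ j => rw [hUs j]; exact hBs j (by omega)
  -- U is a chain self-map: A m * U (m+1) = U m * A m.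
  have hcomm : ∀ m, A m * U (m + 1) = U m * A m := by
    intro m
    cases m with
    | zero =>
      rw [hUs 0, hU0]
      rw [Matrix.mul_add, ← Matrix.mul_assoc, hA 0, Matrix.zero_mul]
      simp [Matrix.mul_assoc]
    | succ m =>
      rw [hUs (m + 1), hUs m]
      rw [Matrix.mul_add, ← Matrix.mul_assoc, hA (m + 1), Matrix.zero_mul,
        Matrix.add_mul, Matrix.mul_assoc (B m), hA m, Matrix.mul_zero]
      simp [Matrix.mul_assoc]
  -- θ(U m) is invertible for m ≤ n.
  have hu : ∀ m, m ≤ n → IsUnit ((U m).map θ) := by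
    intro m hm
    refine hinv _ _ ?_
    rw [hUe m hm]
    exact isUnit_one
  -- Step 3: exactness over Λ.
  intro i hi
  cases i with
  | zero =>
    show Function.Surjective ((A 0).map θ).mulVec
    intro w
    obtain ⟨u, hueq⟩ := hu 0 (Nat.zero_le n)
    have h0 : (A 0 * B 0).map θ = u.val := by
      rw [← hU0]; exact hueq.symm
    refine ⟨((B 0).map θ).mulVec
      (u⁻¹.val.mulVec w), ?_⟩
    rw [Matrix.mulVec_mulVec, ← Matrix.map_mul, h0, Matrix.mulVec_mulVec,
      Units.mul_inv, Matrix.one_mulVec]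
  | succ i =>
    intro x hx
    obtain ⟨u, hueq⟩ := hu (i + 1) hi
    obtain ⟨u', hueq'⟩ := hu i (Nat.le_of_succ_le hi)
    -- commuting relation over Λ
    have h1 : (A i).map θ * u.val
        = u'.val * (A i).map θ := by
      rw [hueq, hueq', ← Matrix.map_mul, ← Matrix.map_mul, hcomm i]
    have h2 : (A i).map θ * u⁻¹.val
        = u'⁻¹.val * (A i).map θ := by
      calc (A i).map θ * u⁻¹.val
          = u'⁻¹.val
            * (u'.val * (A i).map θ)
            * u⁻¹.val := by
            rw [← Matrix.mul_assoc, Units.inv_mul, Matrix.one_mul]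
        _ = u'⁻¹.val
            * ((A i).map θ * u.val)
            * u⁻¹.val := by rw [← h1]
        _ = u'⁻¹.val * (A i).map θ := by
            rw [← Matrix.mul_assoc u'⁻¹.val, Matrix.mul_assoc _ u.val, Units.mul_inv,
              Matrix.mul_one]
    set z : Fin (k (i + 1)) → Λ :=
      u⁻¹.val.mulVec x with hz
    have hzker : ((A i).map θ).mulVec z = 0 := by
      rw [hz, Matrix.mulVec_mulVec, h2, ← Matrix.mulVec_mulVec, hx, Matrix.mulVec_zero]
    have hxz : ((U (i + 1)).map θ).mulVec z = x := by
      rw [← hueq, hz, Matrix.mulVec_mulVec, Units.mul_inv, Matrix.one_mulVec]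
    refine ⟨((B (i + 1)).map θ).mulVec z, ?_⟩
    have hsplit : ((U (i + 1)).map θ).mulVec z
        = ((A (i + 1)).map θ).mulVec (((B (i + 1)).map θ).mulVec z)
          + ((B i).map θ).mulVec (((A i).map θ).mulVec z) := by
      rw [hUs i]
      rw [Matrix.map_add θ (fun a b => map_add θ a b), Matrix.add_mulVec,
        Matrix.map_mul, Matrix.map_mul, ← Matrix.mulVec_mulVec, ← Matrix.mulVec_mulVec]
    rw [← hxz, hsplit, hzker, Matrix.mulVec_zero, add_zero]
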